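/- A functor u : T → S is topological if and only if u^op : T^op → S^op is topological; equivalently, u creates u-initial families if and only if it creates u-final families. -/
import Mathlib


open CategoryTheory

universe w v u v₂ u₂

variable {C : Type u} [Category.{v} C] {B : Type u₂} [Category.{v₂} B]

/-- An arrow is vertical (lies in a fiber) if it sits over an identity. -/
def Vert (u : C ⥤ B) {X Y : C} (h : X ⟶ Y) : Prop :=
  ∃ e : u.obj X = u.obj Y, u.map h = eqToHom e

/-- `f : Y ⟶ X` is `u`-cartesian: any `g : Z ⟶ X` sitting over `ψ ≫ u.map f` factors
uniquely through `f` via an arrow over `ψ`. -/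
def CartesianArrow (u : C ⥤ B) {Y X : C} (f : Y ⟶ X) : Prop :=
  ∀ {Z : C} (g : Z ⟶ X) (ψ : u.obj Z ⟶ u.obj Y),
    u.map g = ψ ≫ u.map f → ∃! h : Z ⟶ Y, u.map h = ψ ∧ h ≫ f = g

/-- A family `f i : X ⟶ Xd i` is `u`-cartesian: any family `g i : Y ⟶ Xd i` over the same
base family (with `u.obj Y = u.obj X`) factors through `X` via a unique vertical arrow. -/
def CartesianFamily (u : C ⥤ B) {ι : Type w} {X : C} {Xd : ι → C}
    (f : ∀ i, X ⟶ Xd i) : Prop :=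
  ∀ {Y : C} (e : u.obj Y = u.obj X) (g : ∀ i, Y ⟶ Xd i),
    (∀ i, u.map (g i) = eqToHom e ≫ u.map (f i)) →
    ∃! h : Y ⟶ X, u.map h = eqToHom e ∧ ∀ i, h ≫ f i = g i

/-- A family `f i : X ⟶ Xd i` is `u`-initial: any family `g i : Y ⟶ Xd i` sitting over
`φ ≫ u.map (f i)` factors through `X` via a unique arrow over `φ`. -/
def InitialFamily (u : C ⥤ B) {ι : Type w} {X : C} {Xd : ι → C}
    (f : ∀ i, X ⟶ Xd i) : Prop :=
  ∀ {Y : C} (g : ∀ i, Y ⟶ Xd i) (φ : u.obj Y ⟶ u.obj X),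
    (∀ i, u.map (g i) = φ ≫ u.map (f i)) →
    ∃! h : Y ⟶ X, u.map h = φ ∧ ∀ i, h ≫ f i = g i

/-- A vertical family `π i : X ⟶ Yd i` is a product cone in the fiber: every vertical
family from an object of the same fiber factors through it via a unique vertical arrow. -/
def IsFiberProduct (u : C ⥤ B) {ι : Type w} {X : C} {Yd : ι → C}
    (π : ∀ i, X ⟶ Yd i) : Prop :=
  ∀ {Y : C} (e : u.obj Y = u.obj X) (h : ∀ i, Y ⟶ Yd i),
    (∀ i, Vert u (h i)) →
    ∃! g : Y ⟶ X, u.map g = eqToHom e ∧ ∀ i, g ≫ π i = h i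

/-- `u` is a prefibration: it creates cartesian arrows. -/
def Prefibration (u : C ⥤ B) : Prop :=
  ∀ (X : C) (S0 : B) (φ : S0 ⟶ u.obj X),
    ∃ (Y : C) (f : Y ⟶ X) (e : u.obj Y = S0),
      CartesianArrow u f ∧ u.map f = eqToHom e ≫ φ

/-- `u` is a fibration: a prefibration in which cartesian arrows compose. -/
def Fibration (u : C ⥤ B) : Prop :=
  Prefibration u ∧ ∀ {Z Y X : C} (g : Z ⟶ Y) (f : Y ⟶ X),
    CartesianArrow u g → CartesianArrow u f → CartesianArrow u (g ≫ f)

/-- A family `f i : Xd i ⟶ X` is `u`-final (dual of `u`-initial). -/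
def FinalFamily (u : C ⥤ B) {ι : Type w} {X : C} {Xd : ι → C}
    (f : ∀ i, Xd i ⟶ X) : Prop :=
  ∀ {Y : C} (g : ∀ i, Xd i ⟶ Y) (φ : u.obj X ⟶ u.obj Y),
    (∀ i, u.map (g i) = u.map (f i) ≫ φ) →
    ∃! h : X ⟶ Y, u.map h = φ ∧ ∀ i, f i ≫ h = g i

/-- Cartesian families compose. -/
def CartFamiliesCompose (u : C ⥤ B) : Prop :=
  ∀ {ι : Type (max u v)} {X : C} {Xd : ι → C} (f : ∀ i, X ⟶ Xd i)
    {κ : ι → Type (max u v)} {Zd : ∀ i, κ i → C} (h : ∀ i j, Xd i ⟶ Zd i j),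
    CartesianFamily u f → (∀ i, CartesianFamily u (h i)) →
    CartesianFamily u (fun p : Σ i, κ i => f p.1 ≫ h p.1 p.2)

/-- `u` is topological: it creates cartesian families, and cartesian families compose. -/
def Topological (u : C ⥤ B) : Prop :=
  (∀ {ι : Type (max u v)} {S0 : B} (Xd : ι → C) (φ : ∀ i, S0 ⟶ u.obj (Xd i)),
    ∃ (X : C) (eX : u.obj X = S0) (f : ∀ i, X ⟶ Xd i),
      CartesianFamily u f ∧ ∀ i, u.map (f i) = eqToHom eX ≫ φ i) ∧
  CartFamiliesCompose u

/-- `u` creates initial families. -/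
def CreatesInitialFamilies (u : C ⥤ B) : Prop :=
  ∀ {ι : Type (max u v)} {S0 : B} (Xd : ι → C) (φ : ∀ i, S0 ⟶ u.obj (Xd i)),
    ∃ (X : C) (eX : u.obj X = S0) (f : ∀ i, X ⟶ Xd i),
      InitialFamily u f ∧ ∀ i, u.map (f i) = eqToHom eX ≫ φ i

/-- `u` creates final families. -/
def CreatesFinalFamilies (u : C ⥤ B) : Prop :=
  ∀ {ι : Type (max u v)} {S0 : B} (Xd : ι → C) (φ : ∀ i, u.obj (Xd i) ⟶ S0),
    ∃ (X : C) (eX : u.obj X = S0) (f : ∀ i, Xd i ⟶ X),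
      FinalFamily u f ∧ ∀ i, u.map (f i) = φ i ≫ eqToHom eX.symm


section SelfDualHelpers

variable {F : C ⥤ B}

lemma aux_initial_cart {ι : Type w} {X : C} {Xd : ι → C}
    {f : ∀ i, X ⟶ Xd i} (hf : InitialFamily F f) : CartesianFamily F f := by
  intro Y e g hg
  exact hf g (eqToHom e) hg

universe w'

lemma aux_initial_comp {ι : Type w} {X : C} {Xd : ι → C}
    {f : ∀ i, X ⟶ Xd i} {κ : ι → Type w'} {Zd : ∀ i, κ i → C}
    {h : ∀ i j, Xd i ⟶ Zd i j} (hf : InitialFamily F f)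
    (hh : ∀ i, InitialFamily F (h i)) :
    InitialFamily F (fun p : Σ i, κ i => f p.1 ≫ h p.1 p.2) := by
  intro Y G χ hG
  have hg : ∀ i, ∃! gi : Y ⟶ Xd i, F.map gi = χ ≫ F.map (f i) ∧
      ∀ j, gi ≫ h i j = G ⟨i, j⟩ := by
    intro i
    exact hh i (fun j => G ⟨i, j⟩) (χ ≫ F.map (f i))
      (fun j => by rw [hG ⟨i, j⟩]; simp [F.map_comp])
  have hg1 : ∀ i, F.map ((hg i).exists.choose) = χ ≫ F.map (f i) :=
    fun i => (hg i).exists.choose_spec.1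
  have hg2 : ∀ i j, (hg i).exists.choose ≫ h i j = G ⟨i, j⟩ :=
    fun i => (hg i).exists.choose_spec.2
  obtain ⟨m, ⟨hm1, hm2⟩, hmu⟩ := hf (fun i => (hg i).exists.choose) χ hg1
  refine ⟨m, ⟨hm1, ?_⟩, ?_⟩
  · rintro ⟨i, j⟩
    rw [← Category.assoc, hm2 i, hg2 i j]
  · rintro m' ⟨hm'1, hm'2⟩
    have hstep : ∀ i, m' ≫ f i = (hg i).exists.choose := by
      intro i
      refine (hg i).unique ⟨?_, fun j => ?_⟩ ⟨hg1 i, hg2 i⟩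
      · rw [F.map_comp, hm'1]
      · rw [Category.assoc]; exact hm'2 ⟨i, j⟩
    exact hmu m' ⟨hm'1, hstep⟩

lemma aux_cart_initial {ι : Type (max u v)} {X : C} {Xd : ι → C}
    {f : ∀ i, X ⟶ Xd i} (hcif : CreatesInitialFamilies F) (hf : CartesianFamily F f) :
    InitialFamily F f := by
  obtain ⟨X', eX', f', hf', hf'phi⟩ := hcif Xd (fun i => F.map (f i))
  have hf'c : CartesianFamily F f' := aux_initial_cart hf'
  obtain ⟨a, ⟨ha1, ha2⟩, hau⟩ := hf' f (eqToHom eX'.symm)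
    (fun i => by rw [hf'phi i]; simp)
  obtain ⟨b, ⟨hb1, hb2⟩, hbu⟩ := hf eX' f' (fun i => hf'phi i)
  have hab : a ≫ b = 𝟙 X := by
    obtain ⟨c, hc, hcu⟩ := hf rfl f (fun i => by simp)
    rw [hcu (a ≫ b) ⟨by rw [F.map_comp, ha1, hb1]; simp,
        fun i => by rw [Category.assoc, hb2, ha2]⟩,
      hcu (𝟙 X) ⟨by simp, fun i => by simp⟩]
  intro Y g χ hg
  obtain ⟨m, ⟨hm1, hm2⟩, hmu⟩ := hf' g (χ ≫ eqToHom eX'.symm)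
    (fun i => by rw [hg i, hf'phi i]; simp)
  refine ⟨m ≫ b, ⟨by rw [F.map_comp, hm1, hb1]; simp,
    fun i => by rw [Category.assoc, hb2, hm2]⟩, ?_⟩
  rintro h' ⟨hh'1, hh'2⟩
  have hma := hmu (h' ≫ a) ⟨by rw [F.map_comp, hh'1, ha1],
    fun i => by rw [Category.assoc, ha2, hh'2]⟩
  calc h' = h' ≫ 𝟙 X := by simp
    _ = h' ≫ (a ≫ b) := by rw [hab]
    _ = (h' ≫ a) ≫ b := by rw [Category.assoc]
    _ = m ≫ b := by rw [hma]

lemma aux_cif_to_top (h : CreatesInitialFamilies F) : Topological F := by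
  constructor
  · intro ι S0 Xd φ
    obtain ⟨X, eX, f, hf, hfphi⟩ := h Xd φ
    exact ⟨X, eX, f, aux_initial_cart hf, hfphi⟩
  · intro ι X Xd f κ Zd hfam hfc hhc
    exact aux_initial_cart (aux_initial_comp (aux_cart_initial h hfc)
      (fun i => aux_cart_initial h (hhc i)))

lemma aux_top_to_cif (hu : Topological F) : CreatesInitialFamilies F := by
  intro ι S0 Xd φ
  obtain ⟨X, eX, f, hf, hfphi⟩ := hu.1 Xd φ
  refine ⟨X, eX, f, ?_, hfphi⟩
  intro Y g χ hg
  obtain ⟨W, eW, k, hk, hkphi⟩ := hu.1 (ι := PUnit.{max u v + 1}) (fun _ => X) (fun _ => χ)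
  have hcomp : CartesianFamily F (fun p : Σ _ : PUnit.{max u v + 1}, ι => k p.1 ≫ f p.2) :=
    hu.2 k (fun _ i => f i) hk (fun _ => hf)
  have hgW : ∀ p : Σ _ : PUnit.{max u v + 1}, ι,
      F.map (g p.2) = eqToHom eW.symm ≫ F.map (k p.1 ≫ f p.2) := by
    rintro ⟨x, i⟩
    rw [F.map_comp, hkphi x, hg i]
    simp
  obtain ⟨h₀, ⟨h₀u, h₀c⟩, h₀uniq⟩ := hcomp eW.symm (fun p => g p.2) hgW
  refine ⟨h₀ ≫ k PUnit.unit, ⟨?_, fun i => ?_⟩, ?_⟩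
  · rw [F.map_comp, h₀u, hkphi PUnit.unit]; simp
  · rw [Category.assoc]; exact h₀c ⟨PUnit.unit, i⟩
  · rintro h' ⟨hh'1, hh'2⟩
    obtain ⟨h₁, ⟨h₁u, h₁c⟩, h₁uniq⟩ := hk eW.symm (fun _ => h')
      (fun x => by rw [hh'1, hkphi x]; simp)
    have h10 : h₁ = h₀ := by
      refine h₀uniq h₁ ⟨h₁u, ?_⟩
      rintro ⟨x, i⟩
      rw [← Category.assoc, h₁c x, hh'2 i]
    rw [← h₁c PUnit.unit, h10]

lemma aux_cif_enc (hu : CreatesInitialFamilies F) (S0 : B) (Y : C) :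
    ∃ L : (S0 ⟶ F.obj Y) → Σ X : C, (X ⟶ Y), Function.Injective L := by
  classical
  choose X eX f _h hf using fun ψ : S0 ⟶ F.obj Y =>
    hu (ι := PUnit.{max u v + 1}) (fun _ => Y) (fun _ => ψ)
  refine ⟨fun ψ => ⟨X ψ, f ψ PUnit.unit⟩, ?_⟩
  intro ψ ψ' h
  have hc := congrArg (fun q : Σ X' : C, (X' ⟶ Y) =>
      if hq : F.obj q.1 = S0 then some (eqToHom hq.symm ≫ F.map q.2) else none) h
  dsimp only at hc
  rw [dif_pos (eX ψ), dif_pos (eX ψ'), hf ψ PUnit.unit, hf ψ' PUnit.unit] at hc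
  simpa using hc

lemma aux_cif_faithful (hu : CreatesInitialFamilies F) {A A' : C}
    (r s : A ⟶ A') (hrs : F.map r = F.map s) : r = s := by
  classical
  by_contra hne
  set I : Type (max u v) := Σ X : C, (A ⟶ X) with hI
  obtain ⟨X, eX, p, hp, hpphi⟩ := hu (ι := I) (fun _ => A') (fun _ => F.map r)
  have key : ∀ σ : Set I, ∃! h : A ⟶ X, F.map h = eqToHom eX.symm ∧
      ∀ i, h ≫ p i = if i ∈ σ then r else s := by
    intro σ
    refine hp (fun i => if i ∈ σ then r else s) (eqToHom eX.symm) ?_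
    intro i
    rw [hpphi i]
    by_cases hσ : i ∈ σ <;> simp [hσ, hrs]
  apply Function.cantor_injective (fun σ : Set I => (⟨X, (key σ).exists.choose⟩ : I))
  intro σ τ hστ
  have h2 : (key σ).exists.choose = (key τ).exists.choose := by
    have hh := (Sigma.ext_iff.mp hστ).2
    simp only [heq_eq_eq] at hh
    exact hh
  ext i
  have hσi := (key σ).exists.choose_spec.2 i
  have hτi := (key τ).exists.choose_spec.2 i
  rw [h2] at hσi
  have hif : (if i ∈ σ then r else s) = (if i ∈ τ then r else s) := by
    rw [← hσi, hτi]
  by_cases h1 : i ∈ σ <;> by_cases h3 : i ∈ τ <;> simp [h1, h3] at hif ⊢ <;>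
    first
      | exact absurd hif hne
      | exact absurd hif.symm hne

lemma aux_cif_to_cff (hu : CreatesInitialFamilies F) : CreatesFinalFamilies F := by
  classical
  intro ι S0 Xd φ
  choose L hL using fun Y : C => aux_cif_enc hu S0 Y
  let J : Type (max u v) := Σ Y : C, {q : (Σ X' : C, (X' ⟶ Y)) × (∀ i, Xd i ⟶ Y) //
      ∃ ψ : S0 ⟶ F.obj Y, L Y ψ = q.1 ∧ ∀ i, F.map (q.2 i) = φ i ≫ ψ}
  let ψj : ∀ j : J, S0 ⟶ F.obj j.1 := fun j => j.2.2.choose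
  have ψj_spec : ∀ j : J, L j.1 (ψj j) = j.2.1.1 ∧
      ∀ i, F.map (j.2.1.2 i) = φ i ≫ ψj j := fun j => j.2.2.choose_spec
  obtain ⟨X, eX, p, hp, hpphi⟩ := hu (ι := J) (fun j => j.1) ψj
  have hf : ∀ i, ∃! fi : Xd i ⟶ X, F.map fi = φ i ≫ eqToHom eX.symm ∧
      ∀ j : J, fi ≫ p j = j.2.1.2 i := by
    intro i
    refine hp (fun j => j.2.1.2 i) (φ i ≫ eqToHom eX.symm) ?_
    intro j
    rw [(ψj_spec j).2 i, hpphi j]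
    simp
  refine ⟨X, eX, fun i => (hf i).exists.choose, ?_, fun i => (hf i).exists.choose_spec.1⟩
  intro Y g χ hg
  have hcompat : ∀ i, F.map (g i) = φ i ≫ (eqToHom eX.symm ≫ χ) := by
    intro i
    rw [hg i, (hf i).exists.choose_spec.1]
    simp
  refine ⟨p ⟨Y, ⟨L Y (eqToHom eX.symm ≫ χ), g⟩, ⟨eqToHom eX.symm ≫ χ, rfl, hcompat⟩⟩,
    ⟨?_, fun i => ?_⟩, ?_⟩
  · set j₀ : J := ⟨Y, ⟨L Y (eqToHom eX.symm ≫ χ), g⟩, ⟨eqToHom eX.symm ≫ χ, rfl, hcompat⟩⟩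
      with hj₀
    have hψ : ψj j₀ = eqToHom eX.symm ≫ χ := hL Y (ψj_spec j₀).1
    rw [hpphi j₀, hψ]
    simp
  · exact (hf i).exists.choose_spec.2 _
  · rintro h' ⟨hh'1, hh'2⟩
    set j₀ : J := ⟨Y, ⟨L Y (eqToHom eX.symm ≫ χ), g⟩, ⟨eqToHom eX.symm ≫ χ, rfl, hcompat⟩⟩
      with hj₀
    have hψ : ψj j₀ = eqToHom eX.symm ≫ χ := hL Y (ψj_spec j₀).1
    refine aux_cif_faithful hu h' (p j₀) ?_
    rw [hh'1, hpphi j₀, hψ]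
    simp

lemma aux_cff_to_cif_op (h : CreatesFinalFamilies F) : CreatesInitialFamilies F.op := by
  intro ι S0 Xd φ
  obtain ⟨X, eX, f, hf, hfphi⟩ := h (fun i => (Xd i).unop) (fun i => (φ i).unop)
  have eX' : F.op.obj (Opposite.op X) = S0 := by
    simp only [Functor.op_obj, Opposite.unop_op]
    rw [eX]
  refine ⟨Opposite.op X, eX', fun i => (f i).op, ?_, ?_⟩
  · intro Y g χ hg
    obtain ⟨k, ⟨hk1, hk2⟩, hku⟩ := hf (fun i => (g i).unop) χ.unop
      (fun i => by
        have := congrArg Quiver.Hom.unop (hg i)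
        simpa using this)
    refine ⟨k.op, ⟨by simpa using congrArg Quiver.Hom.op hk1, fun i => ?_⟩, ?_⟩
    · have := congrArg Quiver.Hom.op (hk2 i)
      simpa using this
    · rintro h' ⟨hh1, hh2⟩
      have := hku h'.unop ⟨by simpa using congrArg Quiver.Hom.unop hh1,
        fun i => by simpa using congrArg Quiver.Hom.unop (hh2 i)⟩
      exact Quiver.Hom.unop_inj (by simpa using this)
  · intro i
    have := congrArg Quiver.Hom.op (hfphi i)
    simp only [op_comp, Quiver.Hom.op_unop] at this
    rw [Functor.op_map, Quiver.Hom.unop_op, this]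
    congr 1
    simp [eqToHom_op]
  
lemma aux_cff_op_to_cif (h : CreatesFinalFamilies F.op) : CreatesInitialFamilies F := by
  intro ι S0 Xd φ
  obtain ⟨X', eX', f', hf', hfphi⟩ := h (fun i => Opposite.op (Xd i)) (fun i => (φ i).op)
  have eX : F.obj X'.unop = S0 := by
    have := congrArg Opposite.unop eX'
    simpa using this
  refine ⟨X'.unop, eX, fun i => (f' i).unop, ?_, ?_⟩
  · intro Y g χ hg
    obtain ⟨k, ⟨hk1, hk2⟩, hku⟩ := hf' (fun i => (g i).op) χ.op
      (fun i => by
        have := congrArg Quiver.Hom.op (hg i)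
        simpa using this)
    refine ⟨k.unop, ⟨by simpa using congrArg Quiver.Hom.unop hk1, fun i => ?_⟩, ?_⟩
    · have := congrArg Quiver.Hom.unop (hk2 i)
      simpa using this
    · rintro h' ⟨hh1, hh2⟩
      have := hku h'.op ⟨by simpa using congrArg Quiver.Hom.op hh1,
        fun i => by simpa using congrArg Quiver.Hom.op (hh2 i)⟩
      exact Quiver.Hom.op_inj (by simpa using this)
  · intro i
    have := congrArg Quiver.Hom.unop (hfphi i)
    simp only [unop_comp, Quiver.Hom.unop_op] at this
    rw [Functor.op_map] at this
    rw [Quiver.Hom.unop_op] at this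
    rw [this]
    congr 1
    simp [eqToHom_unop]

end SelfDualHelpers

/-- A functor is topological iff its opposite is topological; equivalently, it creates
initial families iff it creates final families. -/
theorem topological_self_dual (u : C ⥤ B) :
    (Topological u ↔ Topological u.op) ∧
    (CreatesInitialFamilies u ↔ CreatesFinalFamilies u) := by
  have hB : CreatesInitialFamilies u ↔ CreatesFinalFamilies u := by
    constructor
    · exact aux_cif_to_cff
    · intro h
      exact aux_cff_op_to_cif (aux_cif_to_cff (aux_cff_to_cif_op h))
  refine ⟨?_, hB⟩
  constructor
  · intro h
    exact aux_cif_to_top (aux_cff_to_cif_op (aux_cif_to_cff (aux_top_to_cif h)))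
  · intro h
    exact aux_cif_to_top (aux_cff_op_to_cif (aux_cif_to_cff (aux_top_to_cif h)))
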